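/- Fix a packet size d > 0 and an SNR γ > 0, and let ε(m) = Q(ω(m)) where ω(m) = √(m / V(γ)) · (C(γ) − d/m) · ln 2, Q(x) = ∫ₓ^∞ (1/√(2π)) e^{−t²/2} dt, C(γ) = log₂(1+γ), V(γ) = 1 − (1+γ)^{−2}. Then ε is convex on the interval [d / C(γ), ∞), i.e., on the set of blocklengths m for which the rate r = d/m satisfies r ≤ C(γ). -/

import Mathlib

/-!
On `m > 0` one has `ω(m) = K √m - L / √m` with `K, L ≥ 0`, a concave function of `m`
(`√` is concave and `1/√` is convex), and `ω ≥ 0` exactly when `d/m ≤ C(γ)`. The Q-function is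
decreasing, and convex on `[0, ∞)` because its derivative `-φ` (minus the standard normal density)
increases there. A convex decreasing function of a concave function is convex.
-/

/-- The Gaussian Q-function `Q(x) = ∫ₓ^∞ (1/√(2π)) e^{−t²/2} dt`. -/
noncomputable def gaussianQ (x : ℝ) : ℝ :=
  ∫ t in Set.Ioi x, (Real.sqrt (2 * Real.pi))⁻¹ * Real.exp (-t ^ 2 / 2)

/-- Shannon capacity `C(γ) = log₂(1+γ)`. -/
noncomputable def Cap (γ : ℝ) : ℝ := Real.logb 2 (1 + γ)

/-- Channel dispersion `V(γ) = 1 − (1+γ)^{−2}`. -/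
noncomputable def Vdisp (γ : ℝ) : ℝ := 1 - ((1 + γ) ^ 2)⁻¹

/-- The finite-blocklength auxiliary function
`ω(m,γ) = √(m / V(γ)) · (C(γ) − d/m) · ln 2`. -/
noncomputable def ωfbl (d γ m : ℝ) : ℝ :=
  Real.sqrt (m / Vdisp γ) * (Cap γ - d / m) * Real.log 2

open Set MeasureTheory ProbabilityTheory intervalIntegral

theorem ConvexOn.comp_concaveOn_of_mapsTo {𝕜 E α β : Type*} [Semiring 𝕜] [PartialOrder 𝕜]
    [AddCommMonoid E] [AddCommMonoid α] [PartialOrder α] [AddCommMonoid β] [PartialOrder β]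
    [SMul 𝕜 E] [SMul 𝕜 α] [SMul 𝕜 β] {s : Set E} {t : Set β} {f : E → β} {g : β → α}
    (hg : ConvexOn 𝕜 t g) (hf : ConcaveOn 𝕜 s f) (hg' : AntitoneOn g t) (hst : MapsTo f s t) :
    ConvexOn 𝕜 s (g ∘ f) :=
  ⟨hf.1, fun _ hx _ hy _ _ ha hb hab =>
    (hg' (hg.1 (hst hx) (hst hy) ha hb hab) (hst (hf.1 hx hy ha hb hab))
      (hf.2 hx hy ha hb hab)).trans (hg.2 (hst hx) (hst hy) ha hb hab)⟩

theorem hasDerivAt_integral_Ioi {f : ℝ → ℝ} (hf : Continuous f) (hfi : Integrable f) (x : ℝ) :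
    HasDerivAt (fun y => ∫ t in Ioi y, f t) (-f x) x := by
  have hint : ∀ s, IntegrableOn f s := fun _ => hfi.integrableOn
  have hsplit : ∀ y, ∫ t in Ioi y, f t = (∫ t in Ioi 0, f t) - ∫ t in (0 : ℝ)..y, f t := by
    intro y
    have hy := integral_Iic_add_Ioi (hint (Iic y)) (hint (Ioi y))
    have h0 := integral_Iic_add_Ioi (hint (Iic 0)) (hint (Ioi 0))
    have hdiff := integral_Iic_sub_Iic (hint (Iic 0)) (hint (Iic y))
    linarith
  have hprim : HasDerivAt (fun y => ∫ t in (0 : ℝ)..y, f t) (f x) x :=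
    integral_hasDerivAt_right (hf.intervalIntegrable _ _) (hf.stronglyMeasurableAtFilter _ _)
      hf.continuousAt
  rw [funext hsplit, ← zero_sub]
  exact (hasDerivAt_const x _).sub hprim

theorem antitoneOn_gaussianPDFReal (μ : ℝ) (v : NNReal) :
    AntitoneOn (gaussianPDFReal μ v) (Ici μ) := by
  intro x hx y hy hxy
  rw [mem_Ici, ← sub_nonneg] at hx
  simp only [gaussianPDFReal_def]
  gcongr

theorem gaussianQ_eq_integral_gaussianPDFReal (x : ℝ) :
    gaussianQ x = ∫ t in Ioi x, gaussianPDFReal 0 1 t := by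
  unfold gaussianQ gaussianPDFReal
  norm_num

theorem hasDerivAt_gaussianQ (x : ℝ) : HasDerivAt gaussianQ (-gaussianPDFReal 0 1 x) x := by
  have hcont : Continuous (gaussianPDFReal 0 1) := by
    rw [gaussianPDFReal_def]; fun_prop
  simpa only [← gaussianQ_eq_integral_gaussianPDFReal] using
    hasDerivAt_integral_Ioi hcont (integrable_gaussianPDFReal 0 1) x

theorem antitone_gaussianQ : Antitone gaussianQ :=
  antitone_of_hasDerivAt_nonpos hasDerivAt_gaussianQ fun x =>
    neg_nonpos.2 (gaussianPDFReal_nonneg 0 1 x)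

theorem convexOn_gaussianQ : ConvexOn ℝ (Ici 0) gaussianQ := by
  have hdiff : Differentiable ℝ gaussianQ := fun x => (hasDerivAt_gaussianQ x).differentiableAt
  refine MonotoneOn.convexOn_of_deriv (convex_Ici 0) hdiff.continuous.continuousOn
    hdiff.differentiableOn fun x hx y hy hxy => ?_
  rw [interior_Ici] at hx hy
  rw [(hasDerivAt_gaussianQ x).deriv, (hasDerivAt_gaussianQ y).deriv, neg_le_neg_iff]
  exact antitoneOn_gaussianPDFReal 0 1 (mem_Ici_of_Ioi hx) (mem_Ici_of_Ioi hy) hxy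

theorem Cap_pos {γ : ℝ} (hγ : 0 < γ) : 0 < Cap γ :=
  Real.logb_pos one_lt_two (by linarith)

theorem convexOn_inv_sqrt : ConvexOn ℝ (Ioi 0) fun m : ℝ => (√m)⁻¹ := by
  have hinv : ConvexOn ℝ (Ioi 0) fun x : ℝ => x⁻¹ := by simpa using convexOn_zpow (𝕜 := ℝ) (-1)
  exact hinv.comp_concaveOn_of_mapsTo
    (Real.strictConcaveOn_sqrt.concaveOn.subset Ioi_subset_Ici_self (convex_Ioi 0))
    antitoneOn_inv_pos fun m hm => Real.sqrt_pos.2 hm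

theorem ωfbl_eq {d γ m : ℝ} (hm : 0 < m) :
    ωfbl d γ m = Cap γ * Real.log 2 / √(Vdisp γ) * √m - d * Real.log 2 / √(Vdisp γ) * (√m)⁻¹ := by
  have hsq : √m * √m = m := Real.mul_self_sqrt hm.le
  have hs : 0 < √m := Real.sqrt_pos.2 hm
  rw [ωfbl, Real.sqrt_div hm.le]
  field_simp
  linear_combination -(d * (√(Vdisp γ))⁻¹) * hsq

theorem concaveOn_ωfbl {d γ : ℝ} (hd : 0 ≤ d) (hγ : 0 ≤ γ) : ConcaveOn ℝ (Ioi 0) (ωfbl d γ) := by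
  have hC : 0 ≤ Cap γ := Real.logb_nonneg one_lt_two (by linarith)
  have hlog : 0 ≤ Real.log 2 := Real.log_nonneg one_le_two
  have hK : 0 ≤ Cap γ * Real.log 2 / √(Vdisp γ) := by positivity
  have hL : 0 ≤ d * Real.log 2 / √(Vdisp γ) := by positivity
  refine ((Real.strictConcaveOn_sqrt.concaveOn.subset Ioi_subset_Ici_self (convex_Ioi 0)).smul hK
    |>.sub (convexOn_inv_sqrt.smul hL)).congr fun m hm => ?_
  simp only [Pi.sub_apply, smul_eq_mul, ωfbl_eq (mem_Ioi.1 hm)]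

theorem ωfbl_nonneg {d γ m : ℝ} (hd : 0 < d) (hγ : 0 < γ) (hm : d / Cap γ ≤ m) :
    0 ≤ ωfbl d γ m := by
  have hC := Cap_pos hγ
  have hm0 : 0 < m := (div_pos hd hC).trans_le hm
  have hrate : d / m ≤ Cap γ := (div_le_iff₀ hm0).2 (by rwa [div_le_iff₀ hC, mul_comm] at hm)
  have hgap : 0 ≤ Cap γ - d / m := sub_nonneg.2 hrate
  have hlog : 0 ≤ Real.log 2 := Real.log_nonneg one_le_two
  unfold ωfbl
  positivity

/-- For fixed `d > 0` and `γ > 0`, the FBL error probability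
`ε(m) = Q(ω(m))` is convex on `[d / C(γ), ∞)`, i.e. on the set of blocklengths where
the rate `r = d/m` satisfies `r ≤ C(γ)`. -/
theorem statement12 (d γ : ℝ) (hd : 0 < d) (hγ : 0 < γ) :
    ConvexOn ℝ (Set.Ici (d / Cap γ)) (fun m => gaussianQ (ωfbl d γ m)) :=
  convexOn_gaussianQ.comp_concaveOn_of_mapsTo
    ((concaveOn_ωfbl hd.le hγ.le).subset (Ici_subset_Ioi.2 (div_pos hd (Cap_pos hγ)))
      (convex_Ici _))
    (antitone_gaussianQ.antitoneOn _) fun _ hm => ωfbl_nonneg hd hγ hm
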